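/- Fix an integer d ≥ 3 and a real p with 1/(d-1) < p < 1. For every b > 0 and every ε > 0 small enough that p' := p − ε > 1/(d−1), setting ε' := ε/(1−p'), there exist c, C, R > 0 such that the following holds for all sufficiently large n. Let 𝒢 be a regular (b,d)-expander on n vertices with girth greater than 2R, let G' ∼ 𝒢_{p'} and F' ∼ 𝒢_{ε'} be independent, and define V̄₁(G') = { y : A^R_{x,y}(G') holds for some vertex x }. Then with probability at least 1 − C·exp(−c n) there exists a connected component C of the union graph G' ∪ F' containing all but at most 2εn of the vertices of V̄₁(G'). -/

import Mathlib

/-!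
Every vertex of `V̄₁(G')` lies in a component of `G'` with at least `R` vertices, so there are at
most `n / R` such components and at most `4 ^ (n / R)` ways to pick two groups `A`, `B` of them.
If no component of `G' ∪ F'` contains all but `2 ε n` vertices of `V̄₁(G')`, then for one such
choice `|A|, |B| ≥ ε n` and `F'` has no path from `A` to `B`. In the expander `𝒢`, balls of radius
`T ≈ d / (b ε)` around `A` and around `B` cover more than half the vertices even after `b ε n / 2`
edges are deleted, so greedily one finds `≈ b ε n / (4 T)` edge-disjoint `A`–`B` paths of length
at most `2 T`. The sprinkling `F'` misses all of them with probability at most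
`(1 - q ^ (2 T)) ^ (b ε n / (4 T))`, which is exponentially small and beats `4 ^ (n / R)` once `R`
is large.
-/

open scoped Classical symmDiff

noncomputable section

namespace Percolation

variable {V : Type} [Fintype V] [DecidableEq V]

/-- The edge set of `G` as a finset. -/
noncomputable def edgeFinset' (G : SimpleGraph V) : Finset (Sym2 V) :=
  Finset.univ.filter (· ∈ G.edgeSet)

/-- Probability that bond percolation on `G` with parameter `p` produces a spanning
subgraph satisfying `P`. -/
noncomputable def percProb (G : SimpleGraph V) (p : ℝ) (P : SimpleGraph V → Prop) : ℝ :=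
  ∑ s ∈ (edgeFinset' G).powerset,
    (p ^ s.card * (1 - p) ^ ((edgeFinset' G).card - s.card)) *
      (if P (SimpleGraph.fromEdgeSet (↑s)) then 1 else 0)

/-- Joint probability for two independent bond percolations on `G`. -/
noncomputable def percProb2 (G : SimpleGraph V) (p₁ p₂ : ℝ)
    (P : SimpleGraph V → SimpleGraph V → Prop) : ℝ :=
  ∑ s ∈ (edgeFinset' G).powerset, ∑ t ∈ (edgeFinset' G).powerset,
    (p₁ ^ s.card * (1 - p₁) ^ ((edgeFinset' G).card - s.card)) *
    (p₂ ^ t.card * (1 - p₂) ^ ((edgeFinset' G).card - t.card)) *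
      (if P (SimpleGraph.fromEdgeSet (↑s)) (SimpleGraph.fromEdgeSet (↑t)) then 1 else 0)

/-- Number of edges of `G` joining `S` to its complement. -/
noncomputable def cutCard (G : SimpleGraph V) (S : Finset V) : ℕ :=
  ((edgeFinset' G).filter (fun e => ∃ x ∈ S, ∃ y, y ∉ S ∧ e = s(x, y))).card

/-- `G` is a `(b,d)`-expander: max degree at most `d`, and every vertex set of size at most
`n/2` has at least `b|S|` edges to its complement. -/
def IsExpander (G : SimpleGraph V) (b : ℝ) (d : ℕ) : Prop :=
  (∀ v, (G.neighborSet v).ncard ≤ d) ∧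
  ∀ S : Finset V, (S.card : ℝ) ≤ Fintype.card V / 2 → b * S.card ≤ cutCard G S

/-- `G` is a regular `(b,d)`-expander. -/
def IsRegularExpander (G : SimpleGraph V) (b : ℝ) (d : ℕ) : Prop :=
  IsExpander G b d ∧ ∀ v, (G.neighborSet v).ncard = d

/-- The vertices of the connected component `c` of `G`. -/
noncomputable def compVerts (G : SimpleGraph V) (c : G.ConnectedComponent) : Finset V :=
  Finset.univ.filter (fun v => G.connectedComponentMk v = c)

/-- The edges of the connected component `c` of `G`. -/
noncomputable def compEdges (G : SimpleGraph V) (c : G.ConnectedComponent) : Finset (Sym2 V) :=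
  (edgeFinset' G).filter (fun e => ∀ v ∈ e, G.connectedComponentMk v = c)

/-- `c` is a largest connected component of `G`. -/
def IsLargestComp (G : SimpleGraph V) (c : G.ConnectedComponent) : Prop :=
  ∀ c' : G.ConnectedComponent, (compVerts G c').card ≤ (compVerts G c).card

/-- The 2-core of the connected component `c` of `G` : the maximal subgraph of `G`
supported inside `c` all of whose vertices have degree at least 2. -/
noncomputable def twoCoreComp (G : SimpleGraph V) (c : G.ConnectedComponent) : SimpleGraph V :=
  sSup {H : SimpleGraph V | H ≤ G ∧ (∀ v ∈ H.support, G.connectedComponentMk v = c) ∧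
    ∀ v ∈ H.support, 2 ≤ (H.neighborSet v).ncard}

/-- The event `A^R_{x,y}(H)`: the connected component of `y` in `H` with the edge `xy`
removed (if present) has at least `R` vertices. -/
def eventA (H : SimpleGraph V) (R : ℕ) (x y : V) : Prop :=
  R ≤ (compVerts (H.deleteEdges {s(x, y)})
        ((H.deleteEdges {s(x, y)}).connectedComponentMk y)).card

/-- `E₁(H)`: edges `xy` of `H` such that `A^R_{x,y}` or `A^R_{y,x}` holds. -/
noncomputable def E1set (H : SimpleGraph V) (R : ℕ) : Finset (Sym2 V) :=
  (edgeFinset' H).filter (fun e => ∃ x y, e = s(x, y) ∧ (eventA H R x y ∨ eventA H R y x))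

/-- `V₁(H)`: vertices `x` such that for some `y`, `xy ∈ E(H)` and `A^R_{x,y}` holds. -/
noncomputable def V1set (H : SimpleGraph V) (R : ℕ) : Finset V :=
  Finset.univ.filter (fun x => ∃ y, H.Adj x y ∧ eventA H R x y)

/-- `E₂(H)`: edges `xy` of `H` such that both `A^R_{x,y}` and `A^R_{y,x}` hold. -/
noncomputable def E2set (H : SimpleGraph V) (R : ℕ) : Finset (Sym2 V) :=
  (edgeFinset' H).filter (fun e => ∃ x y, e = s(x, y) ∧ eventA H R x y ∧ eventA H R y x)

/-- `V₂(H)`: vertices incident to an edge of `E₂(H)`. -/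
noncomputable def V2set (H : SimpleGraph V) (R : ℕ) : Finset V :=
  Finset.univ.filter (fun x => ∃ e ∈ E2set H R, x ∈ e)

/-- `V̄₁(H)`: vertices `y` such that `A^R_{x,y}(H)` holds for some `x`. -/
noncomputable def Vbar1 (H : SimpleGraph V) (R : ℕ) : Finset V :=
  Finset.univ.filter (fun y => ∃ x, eventA H R x y)

/-- `S` is `k`-thick in `H`: a union of pairwise disjoint subsets, each of size at least
`k`, each inducing a connected subgraph of `H`. -/
def IsThick (H : SimpleGraph V) (k : ℕ) (S : Finset V) : Prop :=
  ∃ P : Finset (Finset V),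
    (∀ T ∈ P, k ≤ T.card ∧ (H.induce (↑T : Set V)).Connected) ∧
    (↑P : Set (Finset V)).PairwiseDisjoint id ∧ S = P.biUnion id

/-- `S` is a separator of `K`. -/
def IsSeparator {W : Type} [Fintype W] (K : SimpleGraph W) (S : Finset W) : Prop :=
  ∃ A B : Finset W, Disjoint A B ∧ Disjoint A S ∧ Disjoint B S ∧
    (∀ w, w ∈ A ∨ w ∈ B ∨ w ∈ S) ∧
    (∀ a ∈ A, ∀ b ∈ B, ¬ K.Adj a b) ∧
    3 * A.card ≤ 2 * Fintype.card W ∧ 3 * B.card ≤ 2 * Fintype.card W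

end Percolation

namespace Percolation

open Finset

section Bernoulli

variable {α : Type*}

def bernoulliExp (q : ℝ) (E : Finset α) (f : Finset α → ℝ) : ℝ :=
  ∑ t ∈ E.powerset, q ^ #t * (1 - q) ^ (#E - #t) * f t

def bernoulliProb (q : ℝ) (E : Finset α) (P : Finset α → Prop) : ℝ :=
  bernoulliExp q E fun t => if P t then 1 else 0

theorem bernoulliExp_const (q c : ℝ) (E : Finset α) : bernoulliExp q E (fun _ => c) = c := by
  rw [bernoulliExp, ← sum_mul, sum_pow_mul_eq_add_pow, add_sub_cancel, one_pow, one_mul]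

theorem bernoulliExp_add (q : ℝ) (E : Finset α) (f g : Finset α → ℝ) :
    bernoulliExp q E (f + g) = bernoulliExp q E f + bernoulliExp q E g := by
  simp only [bernoulliExp, Pi.add_apply, mul_add, sum_add_distrib]

theorem bernoulliExp_sum {ι : Type*} (q : ℝ) (E : Finset α) (I : Finset ι)
    (f : ι → Finset α → ℝ) :
    bernoulliExp q E (fun t => ∑ i ∈ I, f i t) = ∑ i ∈ I, bernoulliExp q E (f i) := by
  simp only [bernoulliExp, mul_sum]
  exact sum_comm

theorem bernoulliExp_mono {q : ℝ} (hq₀ : 0 ≤ q) (hq₁ : q ≤ 1) {E : Finset α}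
    {f g : Finset α → ℝ} (hfg : ∀ t ⊆ E, f t ≤ g t) :
    bernoulliExp q E f ≤ bernoulliExp q E g :=
  sum_le_sum fun t ht => mul_le_mul_of_nonneg_left (hfg t (mem_powerset.mp ht))
    (mul_nonneg (pow_nonneg hq₀ _) (pow_nonneg (sub_nonneg.mpr hq₁) _))

theorem bernoulliExp_congr {q : ℝ} {E : Finset α} {f g : Finset α → ℝ}
    (hfg : ∀ t ⊆ E, f t = g t) : bernoulliExp q E f = bernoulliExp q E g :=
  sum_congr rfl fun t ht => by rw [hfg t (mem_powerset.mp ht)]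

theorem bernoulliExp_union_mul [DecidableEq α] {q : ℝ} {X Y : Finset α} (hXY : Disjoint X Y)
    (f g : Finset α → ℝ) :
    bernoulliExp q (X ∪ Y) (fun t => f (t ∩ X) * g (t ∩ Y)) =
      bernoulliExp q X f * bernoulliExp q Y g := by
  rw [bernoulliExp, bernoulliExp, bernoulliExp, sum_mul_sum, ← sum_product']
  refine sum_nbij' (fun t => (t ∩ X, t ∩ Y)) (fun uv => uv.1 ∪ uv.2) (by simp) (by grind)
    (by grind) (fun uv huv => ?_) ?_
  · simp only [mem_product, mem_powerset] at huv
    ext1 <;> ext a <;> simp <;> grind [disjoint_left]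
  · intro t ht
    simp only [mem_powerset] at ht
    have hcard : #t = #(t ∩ X) + #(t ∩ Y) := by
      rw [← card_union_of_disjoint (hXY.mono inter_subset_right inter_subset_right),
        ← inter_union_distrib_left, inter_eq_left.mpr ht]
    have htX : #(t ∩ X) ≤ #X := card_le_card inter_subset_right
    have htY : #(t ∩ Y) ≤ #Y := card_le_card inter_subset_right
    rw [card_union_of_disjoint hXY, hcard,
      show #X + #Y - (#(t ∩ X) + #(t ∩ Y)) = (#X - #(t ∩ X)) + (#Y - #(t ∩ Y)) by omega,
      pow_add, pow_add]
    ring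

theorem bernoulliProb_not (q : ℝ) (E : Finset α) (P : Finset α → Prop) :
    bernoulliProb q E (fun t => ¬ P t) = 1 - bernoulliProb q E P := by
  rw [eq_sub_iff_add_eq, bernoulliProb, bernoulliProb, ← bernoulliExp_add]
  refine (bernoulliExp_congr fun t _ => ?_).trans (bernoulliExp_const q 1 E)
  by_cases h : P t <;> simp [h]

theorem bernoulliProb_mono {q : ℝ} (hq₀ : 0 ≤ q) (hq₁ : q ≤ 1) {E : Finset α}
    {P Q : Finset α → Prop} (hPQ : ∀ t ⊆ E, P t → Q t) :
    bernoulliProb q E P ≤ bernoulliProb q E Q :=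
  bernoulliExp_mono hq₀ hq₁ fun t ht => by
    by_cases hP : P t
    · simp [hP, hPQ t ht hP]
    · by_cases hQ : Q t <;> simp [hP, hQ]

theorem bernoulliProb_exists_le {ι : Type*} {q : ℝ} (hq₀ : 0 ≤ q) (hq₁ : q ≤ 1) (E : Finset α)
    (I : Finset ι) (P : ι → Finset α → Prop) :
    bernoulliProb q E (fun t => ∃ i ∈ I, P i t) ≤ ∑ i ∈ I, bernoulliProb q E (P i) := by
  simp only [bernoulliProb]
  rw [← bernoulliExp_sum]
  refine bernoulliExp_mono hq₀ hq₁ fun t _ => ?_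
  split_ifs with h
  · obtain ⟨i, hi, hPi⟩ := h
    exact (if_pos hPi).symm.le.trans
      (single_le_sum (f := fun i => if P i t then (1 : ℝ) else 0)
        (fun j _ => by split_ifs <;> norm_num) hi)
  · exact sum_nonneg fun j _ => by split_ifs <;> norm_num

theorem bernoulliProb_superset_self (q : ℝ) (E : Finset α) :
    bernoulliProb q E (E ⊆ ·) = q ^ #E := by
  rw [bernoulliProb, bernoulliExp, sum_eq_single_of_mem E (mem_powerset_self E)]
  · simp
  · intro t ht htE
    rw [if_neg fun h => htE (subset_antisymm (mem_powerset.mp ht) h), mul_zero]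

theorem bernoulliProb_congr {q : ℝ} {E : Finset α} {P Q : Finset α → Prop}
    (hPQ : ∀ t ⊆ E, (P t ↔ Q t)) : bernoulliProb q E P = bernoulliProb q E Q :=
  bernoulliExp_congr fun t ht => by simp only [hPQ t ht]

theorem bernoulliProb_union_and [DecidableEq α] {q : ℝ} {X Y : Finset α} (hXY : Disjoint X Y)
    (P Q : Finset α → Prop) :
    bernoulliProb q (X ∪ Y) (fun t => P (t ∩ X) ∧ Q (t ∩ Y)) =
      bernoulliProb q X P * bernoulliProb q Y Q := by
  rw [bernoulliProb, bernoulliProb, bernoulliProb, ← bernoulliExp_union_mul hXY]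
  refine bernoulliExp_congr fun t _ => ?_
  by_cases hP : P (t ∩ X) <;> by_cases hQ : Q (t ∩ Y) <;> simp [hP, hQ]

theorem bernoulliProb_forall_not_subset (q : ℝ) :
    ∀ {l : List (Finset α)} {E : Finset α}, l.Pairwise Disjoint → (∀ P ∈ l, P ⊆ E) →
      bernoulliProb q E (fun t => ∀ P ∈ l, ¬ P ⊆ t) = (l.map fun P => 1 - q ^ #P).prod
  | [], E, _, _ => by simp [bernoulliProb, bernoulliExp_const]
  | P :: l, E, hl, hlE => by
    classical
    obtain ⟨hPl, hl⟩ := List.pairwise_cons.mp hl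
    have hPE : P ⊆ E := hlE P List.mem_cons_self
    have hlE' : ∀ Q ∈ l, Q ⊆ E \ P := fun Q hQ =>
      subset_sdiff.mpr ⟨hlE Q (List.mem_cons_of_mem _ hQ), (hPl Q hQ).symm⟩
    have hsplit : ∀ t ⊆ E, (∀ Q ∈ P :: l, ¬ Q ⊆ t) ↔
        ¬ P ⊆ t ∩ P ∧ ∀ Q ∈ l, ¬ Q ⊆ t ∩ (E \ P) := fun t _ => by
      rw [List.forall_mem_cons, subset_inter_iff, and_iff_left subset_rfl]
      exact and_congr_right' <| forall₂_congr fun Q hQ => not_congr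
        ⟨fun h => subset_inter h (hlE' Q hQ), fun h => h.trans inter_subset_left⟩
    have hindep := bernoulliProb_union_and (q := q) (disjoint_sdiff : Disjoint P (E \ P))
      (fun u => ¬ P ⊆ u) (fun r => ∀ Q ∈ l, ¬ Q ⊆ r)
    rw [union_sdiff_of_subset hPE] at hindep
    rw [bernoulliProb_congr hsplit, hindep, bernoulliProb_not, bernoulliProb_superset_self,
      bernoulliProb_forall_not_subset q hl hlE', List.map_cons, List.prod_cons]

theorem bernoulliProb_forall_not_subset_le {q : ℝ} (hq₀ : 0 ≤ q) (hq₁ : q ≤ 1)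
    {L : ℕ} {l : List (Finset α)} {E : Finset α} (hl : l.Pairwise Disjoint)
    (hlE : ∀ P ∈ l, P ⊆ E) (hlL : ∀ P ∈ l, #P ≤ L) :
    bernoulliProb q E (fun t => ∀ P ∈ l, ¬ P ⊆ t) ≤ (1 - q ^ L) ^ l.length := by
  rw [bernoulliProb_forall_not_subset q hl hlE]
  calc (l.map fun P => 1 - q ^ #P).prod ≤ (l.map fun _ => 1 - q ^ L).prod :=
        List.prod_map_le_prod_map₀ _ _ (fun P _ => sub_nonneg.mpr (pow_le_one₀ hq₀ hq₁))
          fun P hP => sub_le_sub_left (pow_le_pow_of_le_one hq₀ hq₁ (hlL P hP)) 1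
    _ = (1 - q ^ L) ^ l.length := by simp

end Bernoulli

variable {V : Type} [Fintype V]

theorem percProb2_eq_bernoulliExp (G : SimpleGraph V) (p₁ p₂ : ℝ)
    (P : SimpleGraph V → SimpleGraph V → Prop) :
    percProb2 G p₁ p₂ P = bernoulliExp p₁ (edgeFinset' G) fun s =>
      bernoulliProb p₂ (edgeFinset' G) fun t =>
        P (SimpleGraph.fromEdgeSet ↑s) (SimpleGraph.fromEdgeSet ↑t) := by
  refine sum_congr rfl fun s _ => ?_
  simp only [bernoulliProb, bernoulliExp, mul_sum]
  exact sum_congr rfl fun t _ => by ring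

theorem one_sub_le_percProb2 {G : SimpleGraph V} {p₁ p₂ B : ℝ} (hp₀ : 0 ≤ p₁) (hp₁ : p₁ ≤ 1)
    {P : SimpleGraph V → SimpleGraph V → Prop}
    (hB : ∀ s ⊆ edgeFinset' G, bernoulliProb p₂ (edgeFinset' G)
      (fun t => ¬ P (SimpleGraph.fromEdgeSet ↑s) (SimpleGraph.fromEdgeSet ↑t)) ≤ B) :
    1 - B ≤ percProb2 G p₁ p₂ P := by
  rw [percProb2_eq_bernoulliExp]
  refine (bernoulliExp_const p₁ (1 - B) _).symm.le.trans (bernoulliExp_mono hp₀ hp₁ fun s hs => ?_)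
  linarith [hB s hs, bernoulliProb_not p₂ (edgeFinset' G)
    fun t => P (SimpleGraph.fromEdgeSet ↑s) (SimpleGraph.fromEdgeSet ↑t)]

theorem mem_edgeFinset' {G : SimpleGraph V} {e : Sym2 V} : e ∈ edgeFinset' G ↔ e ∈ G.edgeSet := by
  simp [edgeFinset']

theorem mem_compVerts {H : SimpleGraph V} {c : H.ConnectedComponent} {v : V} :
    v ∈ compVerts H c ↔ H.connectedComponentMk v = c := by
  simp [compVerts]

theorem mem_Vbar1 {H : SimpleGraph V} {R : ℕ} {y : V} :
    y ∈ Vbar1 H R ↔ R ≤ #(compVerts H (H.connectedComponentMk y)) := by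
  unfold Vbar1
  rw [mem_filter, and_iff_right (mem_univ y)]
  unfold eventA
  constructor
  · rintro ⟨x, hx⟩
    refine hx.trans (card_le_card fun u hu => ?_)
    rw [mem_compVerts, SimpleGraph.ConnectedComponent.eq] at hu ⊢
    exact hu.mono (SimpleGraph.deleteEdges_le _)
  · intro h
    refine ⟨y, ?_⟩
    rwa [SimpleGraph.deleteEdges_of_subset_diagSet _ (by simp)]

def walkBall (H : SimpleGraph V) (A : Finset V) (t : ℕ) : Finset V :=
  univ.filter fun y => ∃ a ∈ A, ∃ w : H.Walk a y, w.length ≤ t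

def outerBoundary (H : SimpleGraph V) (S : Finset V) : Finset V :=
  univ.filter fun y => y ∉ S ∧ ∃ x ∈ S, H.Adj x y

theorem mem_outerBoundary {H : SimpleGraph V} {S : Finset V} {y : V} :
    y ∈ outerBoundary H S ↔ y ∉ S ∧ ∃ x ∈ S, H.Adj x y := by
  simp [outerBoundary]

theorem subset_walkBall (H : SimpleGraph V) (A : Finset V) (t : ℕ) : A ⊆ walkBall H A t :=
  fun a ha => mem_filter.mpr ⟨mem_univ a, a, ha, .nil, Nat.zero_le t⟩

theorem walkBall_mono (H : SimpleGraph V) (A : Finset V) {t t' : ℕ} (h : t ≤ t') :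
    walkBall H A t ⊆ walkBall H A t' := by
  simp only [walkBall, subset_iff, mem_filter, mem_univ, true_and]
  exact fun y ⟨a, ha, w, hw⟩ => ⟨a, ha, w, hw.trans h⟩

theorem card_walkBall_add_card_outerBoundary (H : SimpleGraph V) (A : Finset V) (t : ℕ) :
    #(walkBall H A t) + #(outerBoundary H (walkBall H A t)) ≤ #(walkBall H A (t + 1)) := by
  rw [← card_union_of_disjoint (disjoint_right.mpr fun y hy => (mem_outerBoundary.mp hy).1)]
  refine card_le_card (union_subset (walkBall_mono H A t.le_succ) fun y hy => ?_)
  obtain ⟨-, x, hx, hxy⟩ := mem_outerBoundary.mp hy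
  obtain ⟨a, ha, w, hw⟩ := (mem_filter.mp hx).2
  exact mem_filter.mpr ⟨mem_univ y, a, ha, w.concat hxy, by
    rw [SimpleGraph.Walk.length_concat]; omega⟩

/-- Take `J₀` of maximal cardinality among the subfamilies of mass below `r` (`∅` is one); adding
one more index reaches `r` and overshoots by one mass, at most the total minus `2 r`. -/
theorem exists_subset_le_sum_and_le_sum_sdiff {ι : Type*} [DecidableEq ι] {I : Finset ι}
    {m : ι → ℝ} {r : ℝ} (hr : 0 < r) (hI : r ≤ ∑ i ∈ I, m i)
    (hm : ∀ i ∈ I, m i ≤ ∑ j ∈ I, m j - 2 * r) :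
    ∃ J ⊆ I, r ≤ ∑ i ∈ J, m i ∧ r ≤ ∑ i ∈ I \ J, m i := by
  set small := I.powerset.filter fun J => ∑ i ∈ J, m i < r
  obtain ⟨J₀, hJ₀, hmax⟩ := small.exists_max_image card
    ⟨∅, mem_filter.mpr ⟨empty_mem_powerset I, by simpa using hr⟩⟩
  obtain ⟨hJ₀I, hJ₀r⟩ := (mem_filter.mp hJ₀).imp_left mem_powerset.mp
  obtain ⟨i, hi⟩ : (I \ J₀).Nonempty := sdiff_nonempty.mpr fun hIJ => by
    rw [subset_antisymm hJ₀I hIJ] at hJ₀r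
    exact hI.not_gt hJ₀r
  obtain ⟨hiI, hiJ₀⟩ := mem_sdiff.mp hi
  have hJI : insert i J₀ ⊆ I := insert_subset hiI hJ₀I
  have hsum : ∑ j ∈ insert i J₀, m j = m i + ∑ j ∈ J₀, m j := sum_insert hiJ₀
  have hge : r ≤ ∑ j ∈ insert i J₀, m j := by
    by_contra! hlt
    have := hmax _ (mem_filter.mpr ⟨mem_powerset.mpr hJI, hlt⟩)
    rw [card_insert_of_notMem hiJ₀] at this
    omega
  refine ⟨insert i J₀, hJI, hge, ?_⟩
  linarith [sum_sdiff hJI (f := m), hm i hiI]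

theorem four_pow_mul_pow_floor_le {x a : ℝ} (hx₀ : 0 < x) (hx₁ : x ≤ 1) {R : ℕ}
    (hRa : Real.log 4 / R ≤ -Real.log x * a / 2) (n : ℕ) :
    (4 : ℝ) ^ (n / R) * x ^ ⌊a * n⌋₊ ≤ x⁻¹ * Real.exp (-(-Real.log x * a / 2) * n) := by
  have hlogx : Real.log x ≤ 0 := Real.log_nonpos hx₀.le hx₁
  have h4 : (4 : ℝ) ^ (n / R) ≤ Real.exp (-Real.log x * a / 2 * n) := calc
    (4 : ℝ) ^ (n / R) = Real.exp ((n / R : ℕ) * Real.log 4) := by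
      rw [Real.exp_nat_mul, Real.exp_log four_pos]
    _ ≤ Real.exp (-Real.log x * a / 2 * n) := Real.exp_le_exp.mpr <|
      calc ((n / R : ℕ) : ℝ) * Real.log 4 ≤ (n / R : ℝ) * Real.log 4 :=
            mul_le_mul_of_nonneg_right Nat.cast_div_le (Real.log_nonneg (by norm_num))
        _ = Real.log 4 / R * n := by ring
        _ ≤ -Real.log x * a / 2 * n := by gcongr
  have hx : x ^ ⌊a * n⌋₊ ≤ x⁻¹ * Real.exp (Real.log x * a * n) := calc
    x ^ ⌊a * n⌋₊ = Real.exp (⌊a * n⌋₊ * Real.log x) := by rw [Real.exp_nat_mul, Real.exp_log hx₀]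
    _ ≤ Real.exp ((a * n - 1) * Real.log x) :=
      Real.exp_le_exp.mpr (mul_le_mul_of_nonpos_right (Nat.sub_one_lt_floor _).le hlogx)
    _ = x⁻¹ * Real.exp (Real.log x * a * n) := by
      rw [← Real.exp_log (inv_pos.mpr hx₀), ← Real.exp_add, Real.log_inv]
      ring_nf
  calc (4 : ℝ) ^ (n / R) * x ^ ⌊a * n⌋₊
      ≤ Real.exp (-Real.log x * a / 2 * n) * (x⁻¹ * Real.exp (Real.log x * a * n)) := by
        gcongr
    _ = x⁻¹ * Real.exp (-(-Real.log x * a / 2) * n) := by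
      rw [mul_left_comm, ← Real.exp_add]
      ring_nf

section DecidableEq

variable [DecidableEq V]

/-- Each edge of the cut of `S` that survives the deletion of `F` ends at a vertex of the
outer boundary, and at most `d` edges end at any vertex. -/
theorem cutCard_le {G : SimpleGraph V} {d : ℕ} (hdeg : ∀ v, (G.neighborSet v).ncard ≤ d)
    (F : Finset (Sym2 V)) (S : Finset V) :
    cutCard G S ≤ d * #(outerBoundary (G.deleteEdges ↑F) S) + #F := by
  set cut := (edgeFinset' G).filter fun e => ∃ x ∈ S, ∃ y, y ∉ S ∧ e = s(x, y)
  have hsub :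
      cut \ F ⊆ (outerBoundary (G.deleteEdges ↑F) S).biUnion fun y => G.incidenceFinset y := by
    intro e he
    obtain ⟨⟨heG, x, hx, y, hy, rfl⟩, heF⟩ := (mem_sdiff.mp he).imp_left mem_filter.mp
    rw [mem_edgeFinset', SimpleGraph.mem_edgeSet] at heG
    refine mem_biUnion.mpr ⟨y, mem_outerBoundary.mpr ⟨hy, x, hx, ?_⟩, ?_⟩
    · exact (SimpleGraph.deleteEdges_adj ..).mpr ⟨heG, heF⟩
    · exact (SimpleGraph.mem_incidenceFinset ..).mpr ⟨heG, Sym2.mem_mk_right x y⟩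
  have hdeg' : ∀ y, #(G.incidenceFinset y) ≤ d := fun y => by
    rw [G.card_incidenceFinset_eq_degree, ← SimpleGraph.card_neighborFinset_eq_degree,
      SimpleGraph.neighborFinset_def, ← Set.ncard_eq_toFinset_card']
    exact hdeg y
  calc cutCard G S ≤ #(cut \ F) + #F := card_le_card_sdiff_add_card
    _ ≤ ∑ y ∈ outerBoundary (G.deleteEdges ↑F) S, #(G.incidenceFinset y) + #F := by
      gcongr; exact (card_le_card hsub).trans card_biUnion_le
    _ ≤ d * #(outerBoundary (G.deleteEdges ↑F) S) + #F := by
      gcongr; rw [mul_comm]; exact sum_le_card_nsmul _ _ _ fun y _ => hdeg' y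

theorem card_walkBall_ge {G : SimpleGraph V} {b ε : ℝ} {d : ℕ} (hexp : IsExpander G b d)
    (hd : 0 < d) (hb : 0 ≤ b) {A : Finset V} (hA : ε * Fintype.card V ≤ #A)
    {F : Finset (Sym2 V)} (hF : (#F : ℝ) ≤ b * ε * Fintype.card V / 2) :
    ∀ t : ℕ, (#(walkBall (G.deleteEdges ↑F) A t) : ℝ) ≤ Fintype.card V / 2 →
      ε * Fintype.card V + t * (b * ε * Fintype.card V / (2 * d)) ≤
        #(walkBall (G.deleteEdges ↑F) A t)
  | 0, _ => by
    simpa using hA.trans (Nat.cast_le.mpr (card_le_card (subset_walkBall _ A 0)))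
  | t + 1, hsmall => by
    set S := walkBall (G.deleteEdges ↑F) A t
    have hS : (#S : ℝ) ≤ Fintype.card V / 2 :=
      (Nat.cast_le.mpr (card_le_card (walkBall_mono _ A t.le_succ))).trans hsmall
    have ih := card_walkBall_ge hexp hd hb hA hF t hS
    have hεS : ε * Fintype.card V ≤ #S :=
      hA.trans (Nat.cast_le.mpr (card_le_card (subset_walkBall _ A t)))
    have hcut : b * #S ≤ cutCard G S := hexp.2 S hS
    have hgrow : (cutCard G S : ℝ) ≤ d * #(outerBoundary (G.deleteEdges ↑F) S) + #F := by
      exact_mod_cast cutCard_le hexp.1 F S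
    have hstep : (#S : ℝ) + #(outerBoundary (G.deleteEdges ↑F) S) ≤
        #(walkBall (G.deleteEdges ↑F) A (t + 1)) := by
      exact_mod_cast card_walkBall_add_card_outerBoundary _ A t
    have hd' : (0 : ℝ) < d := Nat.cast_pos.mpr hd
    have hbound : b * ε * Fintype.card V / (2 * d) ≤ #(outerBoundary (G.deleteEdges ↑F) S) := by
      rw [div_le_iff₀ (by positivity)]
      nlinarith [mul_le_mul_of_nonneg_left hεS hb]
    push_cast
    linarith

theorem half_lt_card_walkBall {G : SimpleGraph V} {b ε : ℝ} {d : ℕ} (hexp : IsExpander G b d)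
    (hd : 0 < d) (hb : 0 ≤ b) (hε : 0 < ε) (hn : 0 < Fintype.card V) {A : Finset V}
    (hA : ε * Fintype.card V ≤ #A) {F : Finset (Sym2 V)}
    (hF : (#F : ℝ) ≤ b * ε * Fintype.card V / 2) {T : ℕ} (hT : d ≤ T * (b * ε)) :
    (Fintype.card V : ℝ) / 2 < #(walkBall (G.deleteEdges ↑F) A T) := by
  by_contra! hsmall
  have hgrow := card_walkBall_ge hexp hd hb hA hF T hsmall
  have hd' : (0 : ℝ) < d := Nat.cast_pos.mpr hd
  have hn' : (0 : ℝ) < Fintype.card V := Nat.cast_pos.mpr hn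
  have hhalf : (Fintype.card V : ℝ) / 2 ≤ T * (b * ε * Fintype.card V / (2 * d)) := by
    rw [mul_div_assoc', le_div_iff₀ (by positivity)]
    nlinarith
  nlinarith [mul_pos hε hn']

def Connects (P : Finset (Sym2 V)) (A B : Finset V) : Prop :=
  ∃ a ∈ A, ∃ b ∈ B, (SimpleGraph.fromEdgeSet (↑P : Set (Sym2 V))).Reachable a b

/-- The balls of radius `T` around `A` and `B` in `G` minus `F` both cover more than half the
vertices, so they meet. -/
theorem exists_connects_avoiding {G : SimpleGraph V} {b ε : ℝ} {d : ℕ} (hexp : IsExpander G b d)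
    (hd : 0 < d) (hb : 0 ≤ b) (hε : 0 < ε) (hn : 0 < Fintype.card V) {A B : Finset V}
    (hA : ε * Fintype.card V ≤ #A) (hB : ε * Fintype.card V ≤ #B) {F : Finset (Sym2 V)}
    (hF : (#F : ℝ) ≤ b * ε * Fintype.card V / 2) {T : ℕ} (hT : d ≤ T * (b * ε)) :
    ∃ P ⊆ edgeFinset' G, Disjoint P F ∧ #P ≤ 2 * T ∧ Connects P A B := by
  set H := G.deleteEdges (↑F : Set (Sym2 V))
  have hballs : #(univ : Finset V) < #(walkBall H A T) + #(walkBall H B T) := by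
    rw [card_univ, ← Nat.cast_lt (α := ℝ), Nat.cast_add]
    linarith [half_lt_card_walkBall hexp hd hb hε hn hA hF hT,
      half_lt_card_walkBall hexp hd hb hε hn hB hF hT]
  obtain ⟨v, hv⟩ := inter_nonempty_of_card_lt_card_add_card (subset_univ _) (subset_univ _) hballs
  obtain ⟨hvA, hvB⟩ := mem_inter.mp hv
  obtain ⟨a, ha, w₁, hw₁⟩ := (mem_filter.mp hvA).2
  obtain ⟨b', hb', w₂, hw₂⟩ := (mem_filter.mp hvB).2
  set w : H.Walk a b' := w₁.append w₂.reverse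
  have hwH : ∀ e ∈ w.edges, e ∈ G.edgeSet \ ↑F := fun e he => by
    simpa [H, SimpleGraph.edgeSet_deleteEdges] using w.edges_subset_edgeSet he
  refine ⟨w.edges.toFinset, fun e he => ?_, disjoint_left.mpr fun e he heF => ?_, ?_, ?_⟩
  · exact mem_edgeFinset'.mpr (hwH e (List.mem_toFinset.mp he)).1
  · exact (hwH e (List.mem_toFinset.mp he)).2 heF
  · calc #w.edges.toFinset ≤ w.edges.length := List.toFinset_card_le _
      _ ≤ 2 * T := by simp [w]; omega
  · refine ⟨a, ha, b', hb', ⟨w.transfer _ fun e he => ?_⟩⟩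
    rw [SimpleGraph.edgeSet_fromEdgeSet]
    exact ⟨List.mem_toFinset.mpr he, H.not_isDiag_of_mem_edgeSet (w.edges_subset_edgeSet he)⟩

/-- Greedily, each new path avoids the edges of the previous ones; their total number stays
below the `b ε n / 2` edges that the expansion can afford to lose. -/
theorem exists_disjoint_connects {G : SimpleGraph V} {b ε : ℝ} {d : ℕ} (hexp : IsExpander G b d)
    (hd : 0 < d) (hb : 0 ≤ b) (hε : 0 < ε) (hn : 0 < Fintype.card V) {A B : Finset V}
    (hA : ε * Fintype.card V ≤ #A) (hB : ε * Fintype.card V ≤ #B) {T : ℕ}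
    (hT : d ≤ T * (b * ε)) :
    ∀ k : ℕ, (k : ℝ) * (2 * T) ≤ b * ε * Fintype.card V / 2 →
      ∃ Ps : List (Finset (Sym2 V)), Ps.length = k ∧ Ps.Pairwise Disjoint ∧
        ∀ P ∈ Ps, P ⊆ edgeFinset' G ∧ #P ≤ 2 * T ∧ Connects P A B
  | 0, _ => ⟨[], rfl, List.Pairwise.nil, by simp⟩
  | k + 1, hk => by
    have hk' : (k : ℝ) * (2 * T) ≤ b * ε * Fintype.card V / 2 :=
      le_trans (by gcongr; linarith) hk
    obtain ⟨Ps, hlen, hdisj, hPs⟩ := exists_disjoint_connects hexp hd hb hε hn hA hB hT k hk'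
    set F := Ps.toFinset.biUnion id
    have hF : (#F : ℝ) ≤ b * ε * Fintype.card V / 2 := by
      have hcard : #F ≤ k * (2 * T) := calc
        #F ≤ ∑ P ∈ Ps.toFinset, #P := card_biUnion_le
        _ ≤ #Ps.toFinset * (2 * T) :=
          sum_le_card_nsmul _ _ _ fun P hP => (hPs P (List.mem_toFinset.mp hP)).2.1
        _ ≤ k * (2 * T) := by
          gcongr; exact hlen ▸ List.toFinset_card_le Ps
      exact le_trans (by exact_mod_cast hcard) hk'
    obtain ⟨P, hPG, hPF, hPT, hPAB⟩ := exists_connects_avoiding hexp hd hb hε hn hA hB hF hT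
    refine ⟨P :: Ps, by rw [List.length_cons, hlen], List.pairwise_cons.mpr ⟨fun Q hQ => ?_, hdisj⟩,
      fun Q hQ => ?_⟩
    · exact hPF.mono_right (subset_biUnion_of_mem id (List.mem_toFinset.mpr hQ))
    · rcases List.mem_cons.mp hQ with rfl | hQ
      exacts [⟨hPG, hPT, hPAB⟩, hPs Q hQ]

theorem bernoulliProb_not_reachable_le {G : SimpleGraph V} {b ε q : ℝ} {d T k : ℕ}
    (hexp : IsExpander G b d) (hd : 0 < d) (hb : 0 ≤ b) (hε : 0 < ε) (hn : 0 < Fintype.card V)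
    (hq₀ : 0 ≤ q) (hq₁ : q ≤ 1) (hT : d ≤ T * (b * ε))
    (hk : (k : ℝ) * (2 * T) ≤ b * ε * Fintype.card V / 2) {A B : Finset V}
    (hA : ε * Fintype.card V ≤ #A) (hB : ε * Fintype.card V ≤ #B) :
    bernoulliProb q (edgeFinset' G)
        (fun t => ∀ a ∈ A, ∀ b ∈ B, ¬ (SimpleGraph.fromEdgeSet ↑t).Reachable a b) ≤
      (1 - q ^ (2 * T)) ^ k := by
  obtain ⟨Ps, rfl, hdisj, hPs⟩ := exists_disjoint_connects hexp hd hb hε hn hA hB hT k hk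
  refine (bernoulliProb_mono hq₀ hq₁ fun t _ hAB P hP hPt => ?_).trans
    (bernoulliProb_forall_not_subset_le hq₀ hq₁ hdisj (fun P hP => (hPs P hP).1)
      fun P hP => (hPs P hP).2.1)
  obtain ⟨a, ha, b, hb, hab⟩ := (hPs P hP).2.2
  exact hAB a ha b hb (hab.mono (SimpleGraph.fromEdgeSet_mono (coe_subset.mpr hPt)))

def largeComps (H : SimpleGraph V) (R : ℕ) : Finset H.ConnectedComponent :=
  univ.filter fun c => R ≤ #(compVerts H c)

theorem card_largeComps_le (H : SimpleGraph V) {R : ℕ} (hR : 0 < R) :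
    #(largeComps H R) ≤ Fintype.card V / R := by
  rw [Nat.le_div_iff_mul_le hR]
  calc #(largeComps H R) * R ≤ ∑ c ∈ largeComps H R, #(compVerts H c) := by
        rw [← smul_eq_mul, ← sum_const]
        exact sum_le_sum fun c hc => (mem_filter.mp hc).2
    _ = #((largeComps H R).biUnion (compVerts H)) := by
        refine (card_biUnion fun c _ c' _ hcc' => disjoint_left.mpr fun v hv hv' => ?_).symm
        exact hcc' ((mem_compVerts.mp hv).symm.trans (mem_compVerts.mp hv'))
    _ ≤ Fintype.card V := card_le_univ _

def largeCompUnions (H : SimpleGraph V) (R : ℕ) : Finset (Finset V) :=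
  (largeComps H R).powerset.image fun J => J.biUnion (compVerts H)

theorem card_largeCompUnions_le (H : SimpleGraph V) {R : ℕ} (hR : 0 < R) :
    #(largeCompUnions H R) ≤ 2 ^ (Fintype.card V / R) :=
  card_image_le.trans ((card_powerset _).trans_le
    (Nat.pow_le_pow_right two_pos (card_largeComps_le H hR)))

theorem mem_largeCompUnions {H : SimpleGraph V} {R : ℕ} {A : Finset V}
    (hA : ∀ v ∈ A, R ≤ #(compVerts H (H.connectedComponentMk v)) ∧
      compVerts H (H.connectedComponentMk v) ⊆ A) :
    A ∈ largeCompUnions H R := by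
  refine mem_image.mpr ⟨(largeComps H R).filter (compVerts H · ⊆ A),
    mem_powerset.mpr (filter_subset _ _), ?_⟩
  ext v
  simp only [mem_biUnion, mem_filter]
  constructor
  · rintro ⟨c, ⟨-, hcA⟩, hv⟩
    exact hcA hv
  · intro hv
    exact ⟨_, ⟨mem_filter.mpr ⟨mem_univ _, (hA v hv).1⟩, (hA v hv).2⟩, mem_compVerts.mpr rfl⟩

theorem filter_Vbar1_mem_largeCompUnions {H K : SimpleGraph V} (hHK : H ≤ K) (R : ℕ)
    (J : Finset K.ConnectedComponent) :
    (Vbar1 H R).filter (K.connectedComponentMk · ∈ J) ∈ largeCompUnions H R := by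
  refine mem_largeCompUnions fun v hv => ?_
  obtain ⟨hvW, hvJ⟩ := mem_filter.mp hv
  refine ⟨mem_Vbar1.mp hvW, fun u hu => ?_⟩
  have huv : H.Reachable u v := SimpleGraph.ConnectedComponent.eq.mp (mem_compVerts.mp hu)
  refine mem_filter.mpr ⟨?_, ?_⟩
  · rw [mem_Vbar1, SimpleGraph.ConnectedComponent.sound huv]
    exact mem_Vbar1.mp hvW
  · rw [SimpleGraph.ConnectedComponent.sound (huv.mono hHK)]
    exact hvJ

/-- `A` and `B` collect the vertices of `V̄₁(G')` in two complementary groups of components of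
`G' ⊔ F'`; the groups can be balanced since no component holds more than `|V̄₁(G')| - 2 ε n` of
these vertices. -/
theorem exists_separated_of_not_giant {G' F' : SimpleGraph V} {R : ℕ} {ε : ℝ} (hε : 0 < ε)
    (hn : 0 < Fintype.card V)
    (hbad : ∀ comp : (G' ⊔ F').ConnectedComponent,
      2 * ε * Fintype.card V < #(Vbar1 G' R \ compVerts (G' ⊔ F') comp)) :
    ∃ A ∈ largeCompUnions G' R, ∃ B ∈ largeCompUnions G' R,
      ε * Fintype.card V ≤ #A ∧ ε * Fintype.card V ≤ #B ∧
        ∀ a ∈ A, ∀ b ∈ B, ¬ F'.Reachable a b := by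
  set K := G' ⊔ F'
  set W := Vbar1 G' R
  set m : K.ConnectedComponent → ℝ := fun c => #(W.filter (K.connectedComponentMk · = c))
  have hmass : ∀ J : Finset K.ConnectedComponent,
      ∑ c ∈ J, m c = #(W.filter (K.connectedComponentMk · ∈ J)) := fun J => by
    rw [← sum_card_fiberwise_eq_card_filter W J K.connectedComponentMk, Nat.cast_sum]
  have htotal : ∑ c, m c = #W := by
    rw [hmass, filter_true_of_mem fun v _ => mem_univ _]
  have hcomp : ∀ c, m c + #(W \ compVerts K c) = #W := fun c => by
    have : W \ compVerts K c = W.filter (¬ K.connectedComponentMk · = c) := by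
      ext v; simp [compVerts]
    rw [this, ← Nat.cast_add, card_filter_add_card_filter_not]
  obtain ⟨v⟩ := Fintype.card_pos_iff.mp hn
  obtain ⟨J, -, hJ, hJc⟩ := exists_subset_le_sum_and_le_sum_sdiff (I := univ) (m := m)
    (mul_pos hε (Nat.cast_pos.mpr hn))
    (by
      rw [htotal]
      have hm : (0 : ℝ) ≤ m (K.connectedComponentMk v) := Nat.cast_nonneg _
      linarith [hcomp (K.connectedComponentMk v), hbad (K.connectedComponentMk v),
        mul_pos hε (Nat.cast_pos.mpr hn)])
    (fun c _ => by linarith [hcomp c, hbad c])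
  refine ⟨_, filter_Vbar1_mem_largeCompUnions le_sup_left R J, _,
    filter_Vbar1_mem_largeCompUnions le_sup_left R (univ \ J), ?_, ?_, ?_⟩
  · rwa [← hmass]
  · rwa [← hmass]
  · intro a ha b hb hab
    have hK := SimpleGraph.ConnectedComponent.sound (hab.mono (le_sup_right : F' ≤ K))
    exact (mem_sdiff.mp (mem_filter.mp hb).2).2 (hK ▸ (mem_filter.mp ha).2)

theorem bernoulliProb_not_giant_le {G : SimpleGraph V} {b ε q : ℝ} {d R T k : ℕ}
    (hexp : IsExpander G b d) (hd : 0 < d) (hb : 0 ≤ b) (hε : 0 < ε) (hn : 0 < Fintype.card V)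
    (hR : 0 < R) (hq₀ : 0 ≤ q) (hq₁ : q ≤ 1) (hT : d ≤ T * (b * ε))
    (hk : (k : ℝ) * (2 * T) ≤ b * ε * Fintype.card V / 2) (G' : SimpleGraph V) :
    bernoulliProb q (edgeFinset' G) (fun t =>
        ¬ ∃ comp : (G' ⊔ SimpleGraph.fromEdgeSet ↑t).ConnectedComponent,
          (#(Vbar1 G' R \ compVerts (G' ⊔ SimpleGraph.fromEdgeSet ↑t) comp) : ℝ) ≤
            2 * ε * Fintype.card V) ≤
      4 ^ (Fintype.card V / R) * (1 - q ^ (2 * T)) ^ k := by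
  set pairs := (largeCompUnions G' R ×ˢ largeCompUnions G' R).filter fun AB =>
    ε * Fintype.card V ≤ #AB.1 ∧ ε * Fintype.card V ≤ #AB.2
  have hpairs : #pairs ≤ 4 ^ (Fintype.card V / R) := calc
    #pairs ≤ #(largeCompUnions G' R) * #(largeCompUnions G' R) :=
      (card_filter_le _ _).trans (card_product _ _).le
    _ ≤ 2 ^ (Fintype.card V / R) * 2 ^ (Fintype.card V / R) := by
      gcongr <;> exact card_largeCompUnions_le G' hR
    _ = 4 ^ (Fintype.card V / R) := by rw [← mul_pow]; norm_num
  calc _ ≤ bernoulliProb q (edgeFinset' G) (fun t => ∃ AB ∈ pairs,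
          ∀ a ∈ AB.1, ∀ b ∈ AB.2, ¬ (SimpleGraph.fromEdgeSet ↑t).Reachable a b) := by
        refine bernoulliProb_mono hq₀ hq₁ fun t _ hbad => ?_
        push Not at hbad
        obtain ⟨A, hA, B, hB, hAε, hBε, hAB⟩ := exists_separated_of_not_giant hε hn hbad
        exact ⟨(A, B), mem_filter.mpr ⟨mem_product.mpr ⟨hA, hB⟩, hAε, hBε⟩, hAB⟩
    _ ≤ ∑ AB ∈ pairs, bernoulliProb q (edgeFinset' G) (fun t =>
          ∀ a ∈ AB.1, ∀ b ∈ AB.2, ¬ (SimpleGraph.fromEdgeSet ↑t).Reachable a b) :=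
        bernoulliProb_exists_le hq₀ hq₁ _ _ _
    _ ≤ ∑ _AB ∈ pairs, (1 - q ^ (2 * T)) ^ k := sum_le_sum fun AB hAB =>
        bernoulliProb_not_reachable_le hexp hd hb hε hn hq₀ hq₁ hT hk
          (mem_filter.mp hAB).2.1 (mem_filter.mp hAB).2.2
    _ ≤ 4 ^ (Fintype.card V / R) * (1 - q ^ (2 * T)) ^ k := by
        rw [sum_const, nsmul_eq_mul]
        gcongr
        · exact pow_nonneg (sub_nonneg.mpr (pow_le_one₀ hq₀ hq₁)) k
        · exact_mod_cast hpairs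

theorem one_sub_le_percProb2_giant {G : SimpleGraph V} {b ε p₁ q : ℝ} {d R T : ℕ}
    (hexp : IsExpander G b d) (hd : 0 < d) (hb : 0 ≤ b) (hε : 0 < ε) (hn : 0 < Fintype.card V)
    (hR : 0 < R) (hp₀ : 0 ≤ p₁) (hp₁ : p₁ ≤ 1) (hq₀ : 0 ≤ q) (hq₁ : q ≤ 1)
    (hT : d ≤ T * (b * ε)) :
    1 - 4 ^ (Fintype.card V / R) * (1 - q ^ (2 * T)) ^ ⌊b * ε / (4 * T) * Fintype.card V⌋₊ ≤
      percProb2 G p₁ q (fun G' F' => ∃ comp : (G' ⊔ F').ConnectedComponent,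
        (#(Vbar1 G' R \ compVerts (G' ⊔ F') comp) : ℝ) ≤ 2 * ε * Fintype.card V) := by
  have hT₀ : (0 : ℝ) < T :=
    pos_of_mul_pos_left ((Nat.cast_pos.mpr hd).trans_le hT) (mul_nonneg hb hε.le)
  have hk : (⌊b * ε / (4 * T) * Fintype.card V⌋₊ : ℝ) * (2 * T) ≤
      b * ε * Fintype.card V / 2 := calc
    _ ≤ b * ε / (4 * T) * Fintype.card V * (2 * T) := by
      gcongr; exact Nat.floor_le (by positivity)
    _ = b * ε * Fintype.card V / 2 := by field_simp; ring
  exact one_sub_le_percProb2 hp₀ hp₁ fun s _ =>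
    bernoulliProb_not_giant_le hexp hd hb hε hn hR hq₀ hq₁ hT hk _

end DecidableEq

theorem giant_after_sprinkling_general (d : ℕ) (hd : 3 ≤ d) (p : ℝ)
    (hp1 : p < 1)
    (b ε : ℝ) (hb : 0 < b) (hε : 0 < ε)
    (hp' : 1 / ((d : ℝ) - 1) < p - ε) :
    ∃ c > (0:ℝ), ∃ C > (0:ℝ), ∃ R : ℕ, 0 < R ∧ ∃ n₀ : ℕ,
      ∀ (V : Type) [Fintype V] [DecidableEq V] (G : SimpleGraph V),
        n₀ ≤ Fintype.card V → IsRegularExpander G b d →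
        ((2 * R : ℕ) : ℕ∞) < G.girth →
        1 - C * Real.exp (-c * Fintype.card V) ≤
          percProb2 G (p - ε) (ε / (1 - (p - ε))) (fun G' F' =>
            ∃ comp : (G' ⊔ F').ConnectedComponent,
              (((Vbar1 G' R) \ compVerts (G' ⊔ F') comp).card : ℝ)
                ≤ 2 * ε * Fintype.card V) := by
  have hd₀ : 0 < d := by omega
  have hp₀ : 0 < p - ε := lt_trans (one_div_pos.mpr (by norm_num; omega)) hp'
  set q := ε / (1 - (p - ε))
  have hq₀ : 0 < q := div_pos hε (by linarith)
  have hq₁ : q < 1 := (div_lt_one (by linarith)).mpr (by linarith)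
  set T := ⌈(d : ℝ) / (b * ε)⌉₊
  have hT : (d : ℝ) ≤ T * (b * ε) := (div_le_iff₀ (mul_pos hb hε)).mp (Nat.le_ceil _)
  have hT₀ : 0 < T := Nat.ceil_pos.mpr (div_pos (Nat.cast_pos.mpr hd₀) (mul_pos hb hε))
  set x := 1 - q ^ (2 * T)
  have hx₀ : 0 < x := sub_pos.mpr (pow_lt_one₀ hq₀.le hq₁ (by omega))
  have hx₁ : x < 1 := sub_lt_self 1 (pow_pos hq₀ _)
  set c := -Real.log x * (b * ε / (4 * T)) / 2
  have ha : 0 < b * ε / (4 * T) := div_pos (mul_pos hb hε) (by positivity)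
  have hc : 0 < c := div_pos (mul_pos (neg_pos.mpr (Real.log_neg hx₀ hx₁)) ha) two_pos
  set R := ⌈Real.log 4 / c⌉₊ + 1
  have hR₀ : 0 < R := Nat.succ_pos _
  have hR : Real.log 4 / R ≤ c := by
    rw [div_le_iff₀ (Nat.cast_pos.mpr hR₀), ← div_le_iff₀' hc]
    exact (Nat.le_ceil _).trans (Nat.cast_le.mpr (Nat.le_succ _))
  refine ⟨c, hc, x⁻¹, inv_pos.mpr hx₀, R, hR₀, 1, fun V _ _ G hn hG _ => ?_⟩
  refine le_trans ?_ (one_sub_le_percProb2_giant hG.1 hd₀ hb.le hε hn hR₀ hp₀.le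
    (by linarith) hq₀.le hq₁.le hT)
  linarith [four_pow_mul_pow_floor_le hx₀ hx₁.le hR (Fintype.card V)]

theorem giant_after_sprinkling (d : ℕ) (hd : 3 ≤ d) (p : ℝ)
    (hp : 1 / ((d : ℝ) - 1) < p) (hp1 : p < 1)
    (b ε : ℝ) (hb : 0 < b) (hε : 0 < ε)
    (hp' : 1 / ((d : ℝ) - 1) < p - ε) :
    ∃ c > (0:ℝ), ∃ C > (0:ℝ), ∃ R : ℕ, 0 < R ∧ ∃ n₀ : ℕ,
      ∀ (V : Type) [Fintype V] [DecidableEq V] (G : SimpleGraph V),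
        n₀ ≤ Fintype.card V → IsRegularExpander G b d →
        ((2 * R : ℕ) : ℕ∞) < G.girth →
        1 - C * Real.exp (-c * Fintype.card V) ≤
          percProb2 G (p - ε) (ε / (1 - (p - ε))) (fun G' F' =>
            ∃ comp : (G' ⊔ F').ConnectedComponent,
              (((Vbar1 G' R) \ compVerts (G' ⊔ F') comp).card : ℝ)
                ≤ 2 * ε * Fintype.card V) :=
  giant_after_sprinkling_general d hd p hp1 b ε hb hε hp'

end Percolation

end
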